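/- Let λ ≥ 1/2. Define g : [-λ, 1+λ] → [0,1] by g(z) = (z+λ)/2 if z < 1-λ, g(z) = 1/2 if 1-λ ≤ z ≤ λ, and g(z) = (z-λ+1)/2 if z > λ. Then for every x ∈ [0,1], if ε is uniform on [-λ,λ] and s is uniform on [0,2λ] with x̃ = (min(s,1)+1_{x>s})/2, then g(x+ε) has the same distribution as x̃. -/
import Mathlib


open MeasureTheory Set

/-- Uniform probability measure on the interval `[a,b]`. -/
noncomputable def unif (a b : ℝ) : Measure ℝ :=
  (ENNReal.ofReal (b - a))⁻¹ • volume.restrict (Icc a b)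

/-- The per-coordinate map `g` converting additive-uniform-noise samples into
splitting-noise samples. -/
noncomputable def gMap (lam : ℝ) (z : ℝ) : ℝ :=
  if z < 1 - lam then (z + lam) / 2 else if z ≤ lam then 1/2 else (z - lam + 1) / 2

/-- For `λ ≥ 1/2` and every `x ∈ [0,1]`: if `ε ~ U(-λ,λ)` and `s ~ U(0,2λ)` with
`x̃ = (min(s,1)+1_{x>s})/2`, then `g(x+ε)` has the same distribution as `x̃`. -/
theorem g_pushforward_eq_ssn (lam : ℝ) (hlam : 1/2 ≤ lam) (x : ℝ) (hx : x ∈ Icc (0:ℝ) 1) :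
    (unif (-lam) lam).map (fun e => gMap lam (x + e)) =
      (unif 0 (2 * lam)).map (fun s => (min s 1 + (if s < x then (1:ℝ) else 0)) / 2) := by
  obtain ⟨hx0, hx1⟩ := hx
  have hl0 : (0:ℝ) ≤ lam := le_trans (by norm_num) hlam
  have hx2l : x ≤ 2 * lam := le_trans hx1 (by linarith)
  set φ : ℝ → ℝ := fun s => if s < x then s - x + lam else s - x - lam with hφ
  have hφm : Measurable φ := by
    exact Measurable.ite (measurableSet_lt measurable_id measurable_const)
      (by fun_prop) (by fun_prop)
  have hgm : Measurable (gMap lam) := by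
    unfold gMap
    exact Measurable.ite (measurableSet_lt measurable_id measurable_const) (by fun_prop)
      (Measurable.ite (measurableSet_le measurable_id measurable_const) (by fun_prop)
        (by fun_prop))
  have hGm : Measurable (fun e => gMap lam (x + e)) := hgm.comp (measurable_const_add x)
  -- pushforward of the uniform measure under the piecewise translation φ
  have hp1 : (volume.restrict (Ico (0:ℝ) x)).map φ = volume.restrict (Ico (lam - x) lam) := by
    have hpre : (fun s : ℝ => s + (lam - x)) ⁻¹' (Ico (lam - x) lam) = Ico 0 x := by
      ext s
      simp only [mem_preimage, mem_Ico]
      constructor <;> rintro ⟨h1, h2⟩ <;> constructor <;> linarith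
    calc (volume.restrict (Ico (0:ℝ) x)).map φ
        = (volume.restrict (Ico (0:ℝ) x)).map (fun s => s + (lam - x)) := by
          apply Measure.map_congr
          filter_upwards [ae_restrict_mem measurableSet_Ico] with s hs
          simp only [hφ]
          rw [if_pos hs.2]; ring
      _ = volume.restrict (Ico (lam - x) lam) := by
          have h := (measurePreserving_add_right volume (lam - x)).restrict_preimage
            (s := Ico (lam - x) lam) measurableSet_Ico
          rw [hpre] at h
          exact h.map_eq
  have hp2 : (volume.restrict (Ico x (2 * lam))).map φ
      = volume.restrict (Ico (-lam) (lam - x)) := by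
    have hpre : (fun s : ℝ => s + (-(x + lam))) ⁻¹' (Ico (-lam) (lam - x)) = Ico x (2 * lam) := by
      ext s
      simp only [mem_preimage, mem_Ico]
      constructor <;> rintro ⟨h1, h2⟩ <;> constructor <;> linarith
    calc (volume.restrict (Ico x (2 * lam))).map φ
        = (volume.restrict (Ico x (2 * lam))).map (fun s => s + (-(x + lam))) := by
          apply Measure.map_congr
          filter_upwards [ae_restrict_mem measurableSet_Ico] with s hs
          simp only [hφ]
          rw [if_neg (not_lt.mpr hs.1)]; ring
      _ = volume.restrict (Ico (-lam) (lam - x)) := by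
          have h := (measurePreserving_add_right volume (-(x + lam))).restrict_preimage
            (s := Ico (-lam) (lam - x)) measurableSet_Ico
          rw [hpre] at h
          exact h.map_eq
  have hmapφ : (volume.restrict (Icc 0 (2 * lam))).map φ = volume.restrict (Icc (-lam) lam) := by
    rw [← restrict_Ico_eq_restrict_Icc,
      ← Ico_union_Ico_eq_Ico hx0 hx2l,
      Measure.restrict_union (Ico_disjoint_Ico_same) measurableSet_Ico,
      Measure.map_add _ _ hφm, hp1, hp2, add_comm,
      ← Measure.restrict_union (Ico_disjoint_Ico_same)
        measurableSet_Ico,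
      Ico_union_Ico_eq_Ico (by linarith) (by linarith),
      restrict_Ico_eq_restrict_Icc]
  have key : (volume.restrict (Icc (-lam) lam)).map (fun e => gMap lam (x + e)) =
      (volume.restrict (Icc 0 (2 * lam))).map
        (fun s => (min s 1 + (if s < x then (1:ℝ) else 0)) / 2) := by
    rw [← hmapφ, Measure.map_map hGm hφm]
    apply Measure.map_congr
    filter_upwards [ae_restrict_mem measurableSet_Icc] with s hs
    obtain ⟨hs0, hs2⟩ := hs
    simp only [Function.comp, hφ]
    unfold gMap
    by_cases hsx : s < x
    · rw [if_pos hsx, if_pos hsx]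
      rw [if_neg (by push_neg; linarith : ¬ x + (s - x + lam) < 1 - lam)]
      rcases eq_or_lt_of_le hs0 with h0 | h0
      · rw [if_pos (by linarith : x + (s - x + lam) ≤ lam),
          min_eq_left (by linarith : s ≤ 1), ← h0]
        norm_num
      · rw [if_neg (by push_neg; linarith : ¬ x + (s - x + lam) ≤ lam),
          min_eq_left (by linarith : s ≤ 1)]
        ring
    · rw [if_neg hsx, if_neg hsx]
      push_neg at hsx
      by_cases hs1 : s < 1
      · rw [if_pos (by linarith : x + (s - x - lam) < 1 - lam),
          min_eq_left hs1.le]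
        ring
      · push_neg at hs1
        rw [if_neg (by push_neg; linarith : ¬ x + (s - x - lam) < 1 - lam),
          if_pos (by linarith : x + (s - x - lam) ≤ lam),
          min_eq_right hs1]
        norm_num
  have hc : lam - (-lam) = 2 * lam - 0 := by ring
  unfold unif
  rw [hc, Measure.map_smul, Measure.map_smul, key]
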